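/- arXiv:2605.31179 — 8 statements merged into one kernel-verified Lean document; each statement's English description precedes it below -/
import Mathlib

section
/- Let p > 1, q > 1 with 1/p + 1/q = 1, and let n be a positive integer. If a_1,…,a_n ≥ 0 and b_1,…,b_n ≥ 0 satisfy Σ_{k=1}^n a_k = 1 and Σ_{k=1}^n b_k = 1, then 1 − Σ_{k=1}^n a_k^{1/p} b_k^{1/q} ≥ (1/(2pq)) (Σ_{k=1}^n |a_k − b_k|)^2. -/
/-!
Put `θ = 1/p`, so `1/q = 1 - θ`. The weighted AM–GM gap `g(a, b) = θa + (1-θ)b - a^θ b^(1-θ)`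
satisfies `3θ(1-θ)(a - b)² ≤ g(a, b) · (2(2-θ)a + 2(1+θ)b)`. By homogeneity this says that
`t^θ ≤ P(t)/Q(t)`, where `P/Q` with `P = θ(1+θ)t² + 2(1+θ)(2-θ)t + (2-θ)(1-θ)` and
`Q = 2(2-θ)t + 2(1+θ)` is the `(2, 1)` Padé approximant of `t^θ` at `t = 1`. This holds because
`t^(-θ) P(t) - Q(t)` is convex on `(0, ∞)`: its second derivative is
`θ(1-θ)(1+θ)(2-θ)(t-1)² t^(-θ-2)`, and it has a critical zero at `t = 1`.
Cauchy–Schwarz then gives `3θ(1-θ)(∑|aₖ - bₖ|)² ≤ (∑ g(aₖ, bₖ)) · 6 = 6(1 - ∑ aₖ^θ bₖ^(1-θ))`.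
-/

open Finset Real Set

noncomputable def amgmGap (θ a b : ℝ) : ℝ := θ * a + (1 - θ) * b - a ^ θ * b ^ (1 - θ)

/-- `x ^ (-θ) * (P x - x ^ θ * Q x)` for the Padé pair `P, Q` of `rpow_mul_le_pade`,
expanded into powers of `x`. -/
noncomputable def padeGap (θ x : ℝ) : ℝ :=
  θ * (1 + θ) * x ^ (2 - θ) + 2 * (1 + θ) * (2 - θ) * x ^ (1 - θ)
    + (2 - θ) * (1 - θ) * x ^ (-θ) - 2 * (2 - θ) * x - 2 * (1 + θ)

noncomputable def padeGapDeriv (θ x : ℝ) : ℝ :=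
  θ * (1 + θ) * (2 - θ) * x ^ (1 - θ) + 2 * (1 + θ) * (2 - θ) * (1 - θ) * x ^ (-θ)
    - θ * (2 - θ) * (1 - θ) * x ^ (-θ - 1) - 2 * (2 - θ)

variable {θ x : ℝ}

lemma hasDerivAt_const_mul_rpow (c r : ℝ) (hx : 0 < x) :
    HasDerivAt (fun y => c * y ^ r) (c * r * x ^ (r - 1)) x := by
  simpa [mul_assoc] using (hasDerivAt_rpow_const (p := r) (Or.inl hx.ne')).const_mul c

lemma hasDerivAt_padeGap (hx : 0 < x) : HasDerivAt (padeGap θ) (padeGapDeriv θ x) x := by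
  have h := ((((hasDerivAt_const_mul_rpow (θ * (1 + θ)) (2 - θ) hx).add
    (hasDerivAt_const_mul_rpow (2 * (1 + θ) * (2 - θ)) (1 - θ) hx)).add
    (hasDerivAt_const_mul_rpow ((2 - θ) * (1 - θ)) (-θ) hx)).sub
    ((hasDerivAt_id x).const_mul (2 * (2 - θ)))).sub_const (2 * (1 + θ))
  refine h.congr_deriv ?_
  unfold padeGapDeriv
  ring_nf

lemma hasDerivAt_padeGapDeriv (hx : 0 < x) :
    HasDerivAt (padeGapDeriv θ)
      (θ * (1 - θ) * (1 + θ) * (2 - θ) * (x - 1) ^ 2 * x ^ (-θ - 2)) x := by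
  have h := (((hasDerivAt_const_mul_rpow (θ * (1 + θ) * (2 - θ)) (1 - θ) hx).add
    (hasDerivAt_const_mul_rpow (2 * (1 + θ) * (2 - θ) * (1 - θ)) (-θ) hx)).sub
    (hasDerivAt_const_mul_rpow (θ * (2 - θ) * (1 - θ)) (-θ - 1) hx)).sub_const (2 * (2 - θ))
  refine h.congr_deriv ?_
  have hsq : x ^ (1 - θ - 1) = x ^ (-θ - 2) * x ^ 2 := by
    rw [← rpow_natCast, ← rpow_add hx]
    norm_num
  have hlin : x ^ (-θ - 1) = x ^ (-θ - 2) * x := by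
    rw [← rpow_add_one hx.ne']
    ring_nf
  have hconst : x ^ (-θ - 1 - 1) = x ^ (-θ - 2) := by ring_nf
  rw [hsq, hlin, hconst]
  ring

lemma convexOn_padeGap (hθ0 : 0 ≤ θ) (hθ1 : θ ≤ 1) : ConvexOn ℝ (Ioi 0) (padeGap θ) := by
  refine convexOn_of_hasDerivWithinAt2_nonneg (convex_Ioi 0) (f' := padeGapDeriv θ)
    (f'' := fun x => θ * (1 - θ) * (1 + θ) * (2 - θ) * (x - 1) ^ 2 * x ^ (-θ - 2))
    (fun x hx => (hasDerivAt_padeGap hx).continuousAt.continuousWithinAt) ?_ ?_ ?_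
  all_goals rw [interior_Ioi]
  · exact fun x hx => (hasDerivAt_padeGap hx).hasDerivWithinAt
  · exact fun x hx => (hasDerivAt_padeGapDeriv hx).hasDerivWithinAt
  · intro x hx
    have : 0 ≤ θ * (1 - θ) * (1 + θ) * (2 - θ) := by
      apply mul_nonneg (mul_nonneg (mul_nonneg ..) ..) <;> linarith
    have := rpow_nonneg (le_of_lt hx) (-θ - 2)
    positivity

lemma padeGap_nonneg (hθ0 : 0 ≤ θ) (hθ1 : θ ≤ 1) (hx : 0 < x) : 0 ≤ padeGap θ x := by
  have hmin : IsMinOn (padeGap θ) (Ioi 0) 1 := by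
    refine (convexOn_padeGap hθ0 hθ1).isMinOn_of_rightDeriv_eq_zero (by simp) ?_
    rw [(hasDerivAt_padeGap one_pos).hasDerivWithinAt.derivWithin (uniqueDiffWithinAt_Ioi 1)]
    simp only [padeGapDeriv, one_rpow]
    ring
  have hone : padeGap θ 1 = 0 := by
    simp only [padeGap, one_rpow]
    ring
  exact hone ▸ hmin hx

lemma rpow_mul_le_pade (hθ0 : 0 < θ) (hθ1 : θ < 1) {t : ℝ} (ht : 0 ≤ t) :
    t ^ θ * (2 * (2 - θ) * t + 2 * (1 + θ)) ≤
      θ * (1 + θ) * t ^ 2 + 2 * (1 + θ) * (2 - θ) * t + (2 - θ) * (1 - θ) := by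
  rcases ht.eq_or_lt with rfl | ht
  · rw [zero_rpow hθ0.ne']
    nlinarith
  have hgap := padeGap_nonneg hθ0.le hθ1.le ht
  have htθ := rpow_pos_of_pos ht θ
  have : padeGap θ t * t ^ θ = θ * (1 + θ) * t ^ 2 + 2 * (1 + θ) * (2 - θ) * t
      + (2 - θ) * (1 - θ) - t ^ θ * (2 * (2 - θ) * t + 2 * (1 + θ)) := by
    rw [padeGap, rpow_sub ht, rpow_sub ht, rpow_neg ht.le, rpow_two, rpow_one]
    field_simp
    ring
  linarith [mul_nonneg hgap htθ.le]

lemma amgmGap_nonneg (hθ0 : 0 ≤ θ) (hθ1 : θ ≤ 1) {a b : ℝ} (ha : 0 ≤ a) (hb : 0 ≤ b) :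
    0 ≤ amgmGap θ a b :=
  sub_nonneg.mpr (geom_mean_le_arith_mean2_weighted hθ0 (sub_nonneg.mpr hθ1) ha hb (by ring))

lemma mul_sq_sub_le_amgmGap_mul (hθ0 : 0 < θ) (hθ1 : θ < 1) {a b : ℝ} (ha : 0 ≤ a)
    (hb : 0 ≤ b) :
    3 * θ * (1 - θ) * (a - b) ^ 2 ≤ amgmGap θ a b * (2 * (2 - θ) * a + 2 * (1 + θ) * b) := by
  rcases hb.eq_or_lt with rfl | hb
  · rw [amgmGap, zero_rpow (by linarith)]
    nlinarith [mul_nonneg (mul_nonneg hθ0.le (by linarith : 0 ≤ 1 + θ)) (sq_nonneg a)]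
  have hpade := mul_le_mul_of_nonneg_right
    (rpow_mul_le_pade hθ0 hθ1 (div_nonneg ha hb.le)) (sq_nonneg b)
  have hrpow : (a / b) ^ θ * b = a ^ θ * b ^ (1 - θ) := by
    rw [div_rpow ha hb.le, rpow_sub hb, rpow_one]
    field_simp [(rpow_pos_of_pos hb θ).ne']
  have : amgmGap θ a b * (2 * (2 - θ) * a + 2 * (1 + θ) * b) - 3 * θ * (1 - θ) * (a - b) ^ 2
      = (θ * (1 + θ) * (a / b) ^ 2 + 2 * (1 + θ) * (2 - θ) * (a / b) + (2 - θ) * (1 - θ)) * b ^ 2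
        - (a / b) ^ θ * (2 * (2 - θ) * (a / b) + 2 * (1 + θ)) * b ^ 2 := by
    rw [amgmGap, ← hrpow]
    field_simp
    ring
  linarith

lemma mul_sq_sum_abs_sub_le_sum_amgmGap_mul {ι : Type*} (s : Finset ι) (hθ0 : 0 < θ)
    (hθ1 : θ < 1) {a b : ι → ℝ} (ha : ∀ i ∈ s, 0 ≤ a i) (hb : ∀ i ∈ s, 0 ≤ b i) :
    3 * θ * (1 - θ) * (∑ i ∈ s, |a i - b i|) ^ 2 ≤
      (∑ i ∈ s, amgmGap θ (a i) (b i)) *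
        (2 * (2 - θ) * ∑ i ∈ s, a i + 2 * (1 + θ) * ∑ i ∈ s, b i) := by
  have hc : 0 ≤ 3 * θ * (1 - θ) := by nlinarith
  have hcs := sum_sq_le_sum_mul_sum_of_sq_le_mul s
    (r := fun i => √(3 * θ * (1 - θ)) * |a i - b i|)
    (g := fun i => 2 * (2 - θ) * a i + 2 * (1 + θ) * b i)
    (fun i hi => amgmGap_nonneg hθ0.le hθ1.le (ha i hi) (hb i hi))
    (fun i hi => add_nonneg (mul_nonneg (by linarith) (ha i hi))
      (mul_nonneg (by linarith) (hb i hi)))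
    (fun i hi => by
      rw [mul_pow, sq_sqrt hc, sq_abs]
      exact mul_sq_sub_le_amgmGap_mul hθ0 hθ1 (ha i hi) (hb i hi))
  rwa [← mul_sum, mul_pow, sq_sqrt hc, sum_add_distrib, ← mul_sum, ← mul_sum] at hcs

theorem holder_L1_stability_discrete_general
    (p q : ℝ) (hp : 1 < p) (hpq : 1/p + 1/q = 1)
    (n : ℕ) (a b : Fin n → ℝ)
    (ha : ∀ k, 0 ≤ a k) (hb : ∀ k, 0 ≤ b k)
    (hsa : ∑ k, a k = 1) (hsb : ∑ k, b k = 1) :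
    1 - ∑ k, (a k) ^ (1/p) * (b k) ^ (1/q)
      ≥ (1/(2*p*q)) * (∑ k, |a k - b k|)^2 := by
  set θ := 1 / p
  have hθ0 : 0 < θ := by positivity
  have hθ1 : θ < 1 := (div_lt_one (by linarith)).mpr hp
  have hq : 1 / q = 1 - θ := by linarith
  have hcoeff : 1 / (2 * p * q) = 3 * θ * (1 - θ) / 6 := by
    rw [← hq]
    ring
  have hgap : ∑ k, amgmGap θ (a k) (b k) = 1 - ∑ k, a k ^ θ * b k ^ (1 - θ) := by
    simp only [amgmGap, sum_sub_distrib, sum_add_distrib, ← mul_sum, hsa, hsb]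
    ring
  have hmain := mul_sq_sum_abs_sub_le_sum_amgmGap_mul univ hθ0 hθ1 (fun k _ => ha k)
    (fun k _ => hb k)
  rw [hgap, hsa, hsb] at hmain
  rw [hq, hcoeff]
  linarith

theorem holder_L1_stability_discrete
    (p q : ℝ) (hp : 1 < p) (hq : 1 < q) (hpq : 1/p + 1/q = 1)
    (n : ℕ) (hn : 0 < n) (a b : Fin n → ℝ)
    (ha : ∀ k, 0 ≤ a k) (hb : ∀ k, 0 ≤ b k)
    (hsa : ∑ k, a k = 1) (hsb : ∑ k, b k = 1) :
    1 - ∑ k, (a k) ^ (1/p) * (b k) ^ (1/q)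
      ≥ (1/(2*p*q)) * (∑ k, |a k - b k|)^2 :=
  holder_L1_stability_discrete_general p q hp hpq n a b ha hb hsa hsb
end

section
/- Let p > 1, q > 1 with 1/p + 1/q = 1, and set A = (2 − 1/p)/3 and B = (1 + 1/p)/3, so A + B = 1. Then for all real a > 0 and b > 0, a/p + b/q − a^{1/p} b^{1/q} ≥ (1/(2pq)) · (a − b)^2 / (A·a + B·b). -/
/-!
Write `α = 1/p`, so `1/q = 1 - α`, `A = (2 - α)/3`, `B = (1 + α)/3` and `1/(2pq) = α(1 - α)/2`.
By homogeneity it suffices to take `b = 1` and show that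
`g x = α x + (1 - α) - x ^ α - α(1 - α)/2 · (x - 1)² / (A x + B)` is nonnegative for `x > 0`.
Since `g 1 = g' 1 = 0`, it is enough that `g` be convex. Because `A + B = 1`, the second derivative
is `g'' x = α(1 - α) (x ^ (α - 2) - (A x + B)⁻³)`, and this is nonnegative by weighted AM-GM,
`x ^ A ≤ A x + B`, raised to the third power: `3A = 2 - α`.
-/

open Real Set

noncomputable def youngRemainder (α x : ℝ) : ℝ :=
  α * x + (1 - α) - x ^ α
    - α * (1 - α) / 2 * ((x - 1) ^ 2 / ((2 - α) / 3 * x + (1 + α) / 3))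

noncomputable def youngRemainderDeriv (α x : ℝ) : ℝ :=
  α - α * x ^ (α - 1)
    - α * (1 - α) / 2 * ((2 * (x - 1) * ((2 - α) / 3 * x + (1 + α) / 3)
        - (x - 1) ^ 2 * ((2 - α) / 3)) / ((2 - α) / 3 * x + (1 + α) / 3) ^ 2)

lemma weightedMean_pos {α x : ℝ} (hα₀ : -1 < α) (hα₁ : α ≤ 2) (hx : 0 ≤ x) :
    0 < (2 - α) / 3 * x + (1 + α) / 3 := by
  have : 0 ≤ (2 - α) / 3 * x := mul_nonneg (by linarith) hx
  linarith

lemma inv_weightedMean_cube_le_rpow {α x : ℝ} (hα₀ : -1 ≤ α) (hα₁ : α ≤ 2) (hx : 0 < x) :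
    (((2 - α) / 3 * x + (1 + α) / 3) ^ 3)⁻¹ ≤ x ^ (α - 2) := by
  have hamgm : x ^ ((2 - α) / 3) ≤ (2 - α) / 3 * x + (1 + α) / 3 := by
    simpa using geom_mean_le_arith_mean2_weighted (w₁ := (2 - α) / 3) (w₂ := (1 + α) / 3)
      (by linarith) (by linarith) hx.le zero_le_one (by ring)
  have hcube : x ^ (2 - α) ≤ ((2 - α) / 3 * x + (1 + α) / 3) ^ 3 := by
    calc x ^ (2 - α) = (x ^ ((2 - α) / 3)) ^ 3 := by
          rw [← rpow_natCast, ← rpow_mul hx.le]; norm_num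
      _ ≤ _ := by gcongr
  rw [show α - 2 = -(2 - α) by ring, rpow_neg hx.le]
  exact inv_anti₀ (by positivity) hcube

lemma hasDerivAt_weightedMean (α x : ℝ) :
    HasDerivAt (fun x ↦ (2 - α) / 3 * x + (1 + α) / 3) ((2 - α) / 3) x := by
  simpa using ((hasDerivAt_id x).const_mul ((2 - α) / 3)).add_const ((1 + α) / 3)

lemma hasDerivAt_youngRemainder {α x : ℝ} (hα₀ : -1 < α) (hα₁ : α ≤ 2) (hx : 0 < x) :
    HasDerivAt (youngRemainder α) (youngRemainderDeriv α x) x := by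
  have hD := weightedMean_pos hα₀ hα₁ hx.le
  have hlin := hasDerivAt_weightedMean α x
  have hsq : HasDerivAt (fun x ↦ (x - 1) ^ 2) (2 * (x - 1)) x := by
    simpa using ((hasDerivAt_id x).sub_const 1).fun_pow 2
  have := (((hasDerivAt_id x).const_mul α).add_const (1 - α)).fun_sub
    (hasDerivAt_rpow_const (p := α) (Or.inl hx.ne')) |>.fun_sub
    ((hsq.div hlin hD.ne').const_mul (α * (1 - α) / 2))
  exact this.congr_deriv (by simp only [youngRemainderDeriv]; ring)

lemma hasDerivAt_youngRemainderDeriv {α x : ℝ} (hα₀ : -1 < α) (hα₁ : α ≤ 2) (hx : 0 < x) :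
    HasDerivAt (youngRemainderDeriv α)
      (α * (1 - α) * (x ^ (α - 2) - (((2 - α) / 3 * x + (1 + α) / 3) ^ 3)⁻¹)) x := by
  have hD := weightedMean_pos hα₀ hα₁ hx.le
  have hlin := hasDerivAt_weightedMean α x
  have hsub : HasDerivAt (fun x ↦ x - 1) 1 x := (hasDerivAt_id x).sub_const 1
  have hnum : HasDerivAt (fun x ↦ 2 * (x - 1) * ((2 - α) / 3 * x + (1 + α) / 3)
      - (x - 1) ^ 2 * ((2 - α) / 3)) (2 * ((2 - α) / 3 * x + (1 + α) / 3)) x :=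
    ((hsub.const_mul 2).mul hlin).sub ((hsub.fun_pow 2).mul_const ((2 - α) / 3))
      |>.congr_deriv (by ring)
  have := ((hasDerivAt_rpow_const (p := α - 1) (Or.inl hx.ne')).const_mul α).const_sub α
    |>.fun_sub (((hnum.div (hlin.fun_pow 2) (pow_ne_zero 2 hD.ne')).const_mul (α * (1 - α) / 2)))
  refine this.congr_deriv ?_
  rw [show α - 1 - 1 = α - 2 by ring]
  have hD₀ := hD.ne'
  norm_num
  field_simp
  ring

lemma convexOn_youngRemainder {α : ℝ} (hα₀ : 0 ≤ α) (hα₁ : α ≤ 1) :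
    ConvexOn ℝ (Ioi 0) (youngRemainder α) := by
  have hα₀' : -1 < α := by linarith
  have hα₁' : α ≤ 2 := by linarith
  refine convexOn_of_hasDerivWithinAt2_nonneg (convex_Ioi 0) (f' := youngRemainderDeriv α)
    (f'' := fun x ↦ α * (1 - α) * (x ^ (α - 2) - (((2 - α) / 3 * x + (1 + α) / 3) ^ 3)⁻¹))
    (fun x hx ↦ (hasDerivAt_youngRemainder hα₀' hα₁' hx).continuousAt.continuousWithinAt)
    ?_ ?_ ?_ <;> rw [interior_Ioi] <;> intro x hx
  · exact (hasDerivAt_youngRemainder hα₀' hα₁' hx).hasDerivWithinAt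
  · exact (hasDerivAt_youngRemainderDeriv hα₀' hα₁' hx).hasDerivWithinAt
  · exact mul_nonneg (mul_nonneg hα₀ (by linarith))
      (sub_nonneg.2 (inv_weightedMean_cube_le_rpow hα₀'.le hα₁' hx))

lemma youngRemainder_nonneg {α x : ℝ} (hα₀ : 0 ≤ α) (hα₁ : α ≤ 1) (hx : 0 < x) :
    0 ≤ youngRemainder α x := by
  have hα₀' : -1 < α := by linarith
  have hα₁' : α ≤ 2 := by linarith
  have hmin : IsMinOn (youngRemainder α) (Ioi 0) 1 := by
    refine (convexOn_youngRemainder hα₀ hα₁).isMinOn_of_rightDeriv_eq_zero (by simp) ?_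
    rw [(hasDerivAt_youngRemainder hα₀' hα₁' one_pos).hasDerivWithinAt.derivWithin
      (uniqueDiffWithinAt_Ioi 1)]
    simp [youngRemainderDeriv]
  simpa [youngRemainder] using hmin hx

theorem sq_div_le_arith_mean_sub_geom_mean2_weighted {α a b : ℝ} (hα₀ : 0 ≤ α) (hα₁ : α ≤ 1)
    (ha : 0 < a) (hb : 0 < b) :
    α * (1 - α) / 2 * ((a - b) ^ 2 / ((2 - α) / 3 * a + (1 + α) / 3 * b))
      ≤ α * a + (1 - α) * b - a ^ α * b ^ (1 - α) := by
  have hscale : b * youngRemainder α (a / b) = α * a + (1 - α) * b - a ^ α * b ^ (1 - α)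
      - α * (1 - α) / 2 * ((a - b) ^ 2 / ((2 - α) / 3 * a + (1 + α) / 3 * b)) := by
    have hbα := (rpow_pos_of_pos hb α).ne'
    have hD := (weightedMean_pos (α := α) (by linarith) (by linarith) (div_pos ha hb).le).ne'
    have hD' : (2 - α) / 3 * a + (1 + α) / 3 * b ≠ 0 :=
      (add_pos_of_nonneg_of_pos (mul_nonneg (by linarith) ha.le) (mul_pos (by linarith) hb)).ne'
    rw [youngRemainder, div_rpow ha.le hb.le, rpow_sub hb, rpow_one]
    field_simp
  linarith [mul_nonneg hb.le (youngRemainder_nonneg hα₀ hα₁ (div_pos ha hb))]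

theorem strengthened_young_general
    (p q : ℝ) (hp : 1 < p) (hpq : 1/p + 1/q = 1)
    (A B : ℝ) (hA : A = (2 - 1/p)/3) (hB : B = (1 + 1/p)/3)
    (a b : ℝ) (ha : 0 < a) (hb : 0 < b) :
    a/p + b/q - a ^ (1/p) * b ^ (1/q)
      ≥ (1/(2*p*q)) * ((a - b)^2 / (A*a + B*b)) := by
  have hα₀ : 0 ≤ 1 / p := by positivity
  have hα₁ : 1 / p ≤ 1 := by rw [div_le_one (by linarith)]; exact hp.le
  have h1q : 1 / q = 1 - 1 / p := by linarith
  have hc : 1 / (2 * p * q) = 1 / p * (1 - 1 / p) / 2 := by rw [← h1q]; field_simp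
  have key := sq_div_le_arith_mean_sub_geom_mean2_weighted hα₀ hα₁ ha hb
  subst hA hB
  rw [ge_iff_le, hc, div_eq_mul_one_div a p, div_eq_mul_one_div b q, h1q]
  linarith

theorem strengthened_young
    (p q : ℝ) (hp : 1 < p) (hq : 1 < q) (hpq : 1/p + 1/q = 1)
    (A B : ℝ) (hA : A = (2 - 1/p)/3) (hB : B = (1 + 1/p)/3)
    (a b : ℝ) (ha : 0 < a) (hb : 0 < b) :
    a/p + b/q - a ^ (1/p) * b ^ (1/q)
      ≥ (1/(2*p*q)) * ((a - b)^2 / (A*a + B*b)) :=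
  strengthened_young_general p q hp hpq A B hA hB a b ha hb
end

section
/- Let p > 1, q > 1 with 1/p + 1/q = 1, and set A = (2 − 1/p)/3 and B = (1 + 1/p)/3. Define F(x) = 2pq(Ax + B)(x/p + 1/q − x^{1/p}) − (x − 1)^2 for x > 0. Then F(x) ≥ 0 for all x > 0. -/
/-!
Put `t = 1/p ∈ (0, 1)`. Since `p q t (1 - t) = 1`, `F = p q Φ t` with
`Φ t x = 2((2 - t)x + 1 + t)/3 · (t x + 1 - t - x^t) - t(1 - t)(x - 1)²`.
The function `Φ t` and its first two derivatives vanish at `x = 1`, while its third derivative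
`(2/3) t (1 - t)(2 - t)(1 + t) x^(t-3) (x - 1)` has the sign of `x - 1`. Going down one derivative
at a time: `Φ'' ≥ 0`, so `Φ'` has the sign of `x - 1`, so `Φ` attains its minimum `0` at `x = 1`.
-/

open Set

section SignOfDerivative

variable {s : Set ℝ} {f f' : ℝ → ℝ} {c : ℝ}

theorem sub_mul_nonneg_of_monotoneOn (hf : MonotoneOn f s) (hc : c ∈ s) (hfc : f c = 0)
    {x : ℝ} (hx : x ∈ s) : 0 ≤ (x - c) * f x := by
  rcases le_total x c with hxc | hcx
  · exact mul_nonneg_of_nonpos_of_nonpos (by linarith) (hfc ▸ hf hx hc hxc)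
  · exact mul_nonneg (by linarith) (hfc ▸ hf hc hx hcx)

theorem monotoneOn_of_hasDerivAt_nonneg (hs : Convex ℝ s) (hf : ∀ x ∈ s, HasDerivAt f (f' x) x)
    (hf' : ∀ x ∈ interior s, 0 ≤ f' x) : MonotoneOn f s :=
  monotoneOn_of_hasDerivWithinAt_nonneg hs (fun x hx ↦ (hf x hx).continuousAt.continuousWithinAt)
    (fun x hx ↦ (hf x (interior_subset hx)).hasDerivWithinAt) hf'

theorem antitoneOn_of_hasDerivAt_nonpos (hs : Convex ℝ s) (hf : ∀ x ∈ s, HasDerivAt f (f' x) x)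
    (hf' : ∀ x ∈ interior s, f' x ≤ 0) : AntitoneOn f s :=
  antitoneOn_of_hasDerivWithinAt_nonpos hs (fun x hx ↦ (hf x hx).continuousAt.continuousWithinAt)
    (fun x hx ↦ (hf x (interior_subset hx)).hasDerivWithinAt) hf'

theorem nonneg_of_sub_mul_deriv_nonneg (hs : Convex ℝ s) (hf : ∀ x ∈ s, HasDerivAt f (f' x) x)
    (hc : c ∈ s) (hfc : f c = 0) (hf' : ∀ x ∈ s, 0 ≤ (x - c) * f' x) {x : ℝ} (hx : x ∈ s) :
    0 ≤ f x := by
  rcases le_total x c with hxc | hcx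
  · have hanti : AntitoneOn f (s ∩ Iic c) := by
      refine antitoneOn_of_hasDerivAt_nonpos (hs.inter (convex_Iic c))
        (fun y hy ↦ hf y hy.1) fun y hy ↦ ?_
      have hyc : y < c := by simpa using interior_mono inter_subset_right hy
      exact nonpos_of_mul_nonneg_right (hf' y (interior_subset hy).1) (by linarith)
    exact hfc ▸ hanti ⟨hx, hxc⟩ ⟨hc, self_mem_Iic⟩ hxc
  · have hmono : MonotoneOn f (s ∩ Ici c) := by
      refine monotoneOn_of_hasDerivAt_nonneg (hs.inter (convex_Ici c))
        (fun y hy ↦ hf y hy.1) fun y hy ↦ ?_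
      have hcy : c < y := by simpa using interior_mono inter_subset_right hy
      exact nonneg_of_mul_nonneg_right (hf' y (interior_subset hy).1) (by linarith)
    exact hfc ▸ hmono ⟨hc, self_mem_Ici⟩ ⟨hx, hcx⟩ hcx

end SignOfDerivative

theorem hasDerivAt_rpow_sub_const {x : ℝ} (t k : ℝ) (hx : 0 < x) :
    HasDerivAt (fun y : ℝ ↦ y ^ (t - k)) ((t - k) * x ^ (t - (k + 1))) x := by
  simpa [sub_sub] using Real.hasDerivAt_rpow_const (p := t - k) (Or.inl hx.ne')

namespace HolderGap

noncomputable def Φ (t x : ℝ) : ℝ :=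
  2 * ((2 - t) * x + (1 + t)) / 3 * (t * x + (1 - t) - x ^ t) - t * (1 - t) * (x - 1) ^ 2

noncomputable def Φ' (t x : ℝ) : ℝ :=
  2 * (2 - t) / 3 * (t * x + (1 - t) - x ^ t)
    + 2 * ((2 - t) * x + (1 + t)) / 3 * (t - t * x ^ (t - 1)) - 2 * t * (1 - t) * (x - 1)

noncomputable def Φ'' (t x : ℝ) : ℝ :=
  4 * (2 - t) * t / 3 * (1 - x ^ (t - 1))
    + 2 * t * (1 - t) * ((2 - t) * x + (1 + t)) / 3 * x ^ (t - 2) - 2 * t * (1 - t)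

variable {t x : ℝ}

theorem hasDerivAt_Φ (hx : 0 < x) : HasDerivAt (Φ t) (Φ' t x) x := by
  have hid := hasDerivAt_id' x
  have h := (((hid.const_mul (2 - t)).add_const (1 + t)).const_mul 2).div_const 3 |>.mul
    (((hid.const_mul t).add_const (1 - t)).sub (Real.hasDerivAt_rpow_const (p := t) (Or.inl hx.ne')))
    |>.sub (((hid.sub_const 1).pow 2).const_mul (t * (1 - t)))
  unfold Φ Φ'
  refine h.congr_deriv ?_
  norm_num
  ring

theorem hasDerivAt_Φ' (hx : 0 < x) : HasDerivAt (Φ' t) (Φ'' t x) x := by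
  have hid := hasDerivAt_id' x
  have h := (((hid.const_mul t).add_const (1 - t)).sub
      (Real.hasDerivAt_rpow_const (p := t) (Or.inl hx.ne'))).const_mul (2 * (2 - t) / 3)
    |>.add ((((hid.const_mul (2 - t)).add_const (1 + t)).const_mul 2).div_const 3 |>.mul
      (((hasDerivAt_rpow_sub_const t 1 hx).const_mul t).const_sub t))
    |>.sub ((hid.sub_const 1).const_mul (2 * t * (1 - t)))
  unfold Φ' Φ''
  refine h.congr_deriv ?_
  norm_num
  ring

theorem hasDerivAt_Φ'' (hx : 0 < x) :
    HasDerivAt (Φ'' t) (2 * t * (1 - t) * (2 - t) * (1 + t) / 3 * x ^ (t - 3) * (x - 1)) x := by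
  have hid := hasDerivAt_id' x
  have h := ((hasDerivAt_rpow_sub_const t 1 hx).const_sub 1).const_mul (4 * (2 - t) * t / 3)
    |>.add ((((hid.const_mul (2 - t)).add_const (1 + t)).const_mul (2 * t * (1 - t))).div_const 3
      |>.mul (hasDerivAt_rpow_sub_const t 2 hx))
    |>.sub_const (2 * t * (1 - t))
  unfold Φ''
  refine h.congr_deriv ?_
  have : x ^ (t - 2) = x ^ (t - 3) * x := by
    rw [← Real.rpow_add_one hx.ne']; ring_nf
  norm_num [this]
  ring

theorem Φ_one (t : ℝ) : Φ t 1 = 0 := by simp [Φ]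

theorem Φ'_one (t : ℝ) : Φ' t 1 = 0 := by simp [Φ']

theorem Φ''_one (t : ℝ) : Φ'' t 1 = 0 := by simp [Φ'']; ring

theorem Φ_nonneg (ht₀ : 0 < t) (ht₁ : t < 1) (hx : 0 < x) : 0 ≤ Φ t x := by
  have hΦ'' : ∀ y ∈ Ioi (0 : ℝ), 0 ≤ Φ'' t y := by
    refine fun y hy ↦ nonneg_of_sub_mul_deriv_nonneg (convex_Ioi 0) (fun z hz ↦ hasDerivAt_Φ'' hz)
      (mem_Ioi.2 one_pos) (Φ''_one t) (fun z hz ↦ ?_) hy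
    have hC : 0 ≤ 2 * t * (1 - t) * (2 - t) * (1 + t) / 3 * z ^ (t - 3) := by
      have := Real.rpow_pos_of_pos hz (t - 3)
      have : 0 < 1 - t := by linarith
      have : 0 < 2 - t := by linarith
      positivity
    calc 0 ≤ 2 * t * (1 - t) * (2 - t) * (1 + t) / 3 * z ^ (t - 3) * (z - 1) ^ 2 :=
          mul_nonneg hC (sq_nonneg _)
      _ = _ := by ring
  have hΦ' : ∀ y ∈ Ioi (0 : ℝ), 0 ≤ (y - 1) * Φ' t y := fun y hy ↦
    sub_mul_nonneg_of_monotoneOn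
      (monotoneOn_of_hasDerivAt_nonneg (convex_Ioi 0) (fun z hz ↦ hasDerivAt_Φ' hz)
        fun z hz ↦ hΦ'' z (interior_subset hz))
      (mem_Ioi.2 one_pos) (Φ'_one t) hy
  exact nonneg_of_sub_mul_deriv_nonneg (convex_Ioi 0) (fun z hz ↦ hasDerivAt_Φ hz)
    (mem_Ioi.2 one_pos) (Φ_one t) hΦ' hx

end HolderGap

theorem F_nonneg
    (p q : ℝ) (hp : 1 < p) (hq : 1 < q) (hpq : 1/p + 1/q = 1)
    (A B : ℝ) (hA : A = (2 - 1/p)/3) (hB : B = (1 + 1/p)/3)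
    (F : ℝ → ℝ)
    (hF : ∀ x > 0, F x = 2*p*q*(A*x + B)*(x/p + 1/q - x ^ (1/p)) - (x - 1)^2) :
    ∀ x > 0, F x ≥ 0 := by
  intro x hx
  have hp₀ : 0 < p := by linarith
  have hq₀ : 0 < q := by linarith
  have hq' : 1/q = 1 - 1/p := by linarith
  have hpq' : p * q * (1/p * (1 - 1/p)) = 1 := by rw [← hq']; field_simp
  have hF_eq : F x = p * q * HolderGap.Φ (1/p) x := by
    rw [hF x hx, hA, hB, hq']
    unfold HolderGap.Φ
    linear_combination (x - 1) ^ 2 * hpq'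
  have ht₁ : 1/p < 1 := by rw [div_lt_one hp₀]; exact hp
  rw [hF_eq]
  exact mul_nonneg (by positivity) (HolderGap.Φ_nonneg (by positivity) ht₁ hx)
end

section
/- Let p > 1, q > 1 with 1/p + 1/q = 1, set A = (2 − 1/p)/3 and B = (1 + 1/p)/3, and let n be a positive integer. If a_1,…,a_n > 0 and b_1,…,b_n > 0 satisfy Σ_{k=1}^n a_k = 1 and Σ_{k=1}^n b_k = 1, then 1 − Σ_{k=1}^n a_k^{1/p} b_k^{1/q} ≥ (1/(2pq)) Σ_{k=1}^n (a_k − b_k)^2 / (A·a_k + B·b_k). -/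
/-!
Put `s = 1/p`, so `1/q = 1 - s`. Since `∑ (s aₖ + (1 - s) bₖ) = 1`, the left side is the sum of
the weighted AM-GM gaps `s aₖ + (1 - s) bₖ - aₖ^s bₖ^(1-s)`, and it suffices to bound each gap.
By homogeneity this reduces to `t = aₖ / bₖ` and the nonnegativity of
`F(t) = ((2 - s) t + 1 + s)/3 · (s t + 1 - s - t^s) - s (1 - s)/2 · (t - 1)²`.
`F` vanishes to second order at `t = 1`, and
`F'''(t) = s (1 - s) (2 - s) (1 + s)/3 · t^(s-3) (t - 1)` changes sign only at `1`;
hence `F'' ≥ 0`, so `F'` changes sign only at `1`, and `F ≥ F(1) = 0`.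
-/

open Real Set

lemma monotoneOn_Ioi_of_hasDerivAt_nonneg {g g' : ℝ → ℝ} {a : ℝ}
    (hg : ∀ t ∈ Ioi a, HasDerivAt g (g' t) t) (hg' : ∀ t ∈ Ioi a, 0 ≤ g' t) :
    MonotoneOn g (Ioi a) :=
  monotoneOn_of_hasDerivWithinAt_nonneg (convex_Ioi a)
    (fun t ht ↦ (hg t ht).continuousAt.continuousWithinAt)
    (fun t ht ↦ (hg t (interior_subset ht)).hasDerivWithinAt)
    (fun t ht ↦ hg' t (interior_subset ht))

lemma le_of_hasDerivAt_nonpos_of_nonneg {g g' : ℝ → ℝ} {a c : ℝ} (hac : a < c)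
    (hg : ∀ t ∈ Ioi a, HasDerivAt g (g' t) t)
    (hneg : ∀ t ∈ Ioo a c, g' t ≤ 0) (hpos : ∀ t ∈ Ioi c, 0 ≤ g' t) :
    ∀ t ∈ Ioi a, g c ≤ g t := by
  have hcont : ∀ t ∈ Ioi a, ContinuousAt g t := fun t ht ↦ (hg t ht).continuousAt
  intro t ht
  rcases le_total c t with hct | htc
  · have hmono : MonotoneOn g (Ici c) :=
      monotoneOn_of_hasDerivWithinAt_nonneg (convex_Ici c)
        (fun x hx ↦ (hcont x (hac.trans_le hx)).continuousWithinAt)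
        (fun x hx ↦ (hg x (hac.trans (interior_Ici.subset hx))).hasDerivWithinAt)
        (fun x hx ↦ hpos x (interior_Ici.subset hx))
    exact hmono self_mem_Ici hct hct
  · have hanti : AntitoneOn g (Ioc a c) :=
      antitoneOn_of_hasDerivWithinAt_nonpos (convex_Ioc a c)
        (fun x hx ↦ (hcont x hx.1).continuousWithinAt)
        (fun x hx ↦ (hg x (interior_Ioc.subset hx).1).hasDerivWithinAt)
        (fun x hx ↦ hneg x (interior_Ioc.subset hx))
    exact hanti ⟨ht, htc⟩ ⟨hac, le_rfl⟩ htc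

noncomputable def holderDefect (s t : ℝ) : ℝ :=
  ((2 - s) * t + (1 + s)) / 3 * (s * t + (1 - s) - t ^ s) - s * (1 - s) / 2 * (t - 1) ^ 2

noncomputable def holderDefectDeriv (s t : ℝ) : ℝ :=
  (2 - s) / 3 * (s * t + (1 - s) - t ^ s) + ((2 - s) * t + (1 + s)) / 3 * (s - s * t ^ (s - 1))
    - s * (1 - s) * (t - 1)

noncomputable def holderDefectDeriv2 (s t : ℝ) : ℝ :=
  2 * (2 - s) / 3 * (s - s * t ^ (s - 1))
    + s * (1 - s) * (((2 - s) * t + (1 + s)) / 3 * t ^ (s - 2)) - s * (1 - s)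

section

variable {s t : ℝ}

lemma hasDerivAt_holderDefect (ht : 0 < t) :
    HasDerivAt (holderDefect s) (holderDefectDeriv s t) t := by
  have h := ((((hasDerivAt_id t).const_mul (2 - s)).add_const (1 + s)).div_const 3).mul
    ((((hasDerivAt_id t).const_mul s).add_const (1 - s)).sub
      (hasDerivAt_rpow_const (p := s) (Or.inl ht.ne')))
    |>.sub ((((hasDerivAt_id t).sub_const 1).pow 2).const_mul (s * (1 - s) / 2))
  exact h.congr_deriv (by simp only [holderDefectDeriv, Pi.sub_apply, id_eq, mul_one, Nat.cast_ofNat,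
    Nat.add_one_sub_one, pow_one]; ring)

lemma hasDerivAt_holderDefectDeriv (ht : 0 < t) :
    HasDerivAt (holderDefectDeriv s) (holderDefectDeriv2 s t) t := by
  have hpow (r : ℝ) : HasDerivAt (fun x : ℝ ↦ x ^ r) (r * t ^ (r - 1)) t :=
    hasDerivAt_rpow_const (Or.inl ht.ne')
  have h := (((((hasDerivAt_id t).const_mul s).add_const (1 - s)).sub (hpow s)).const_mul
      ((2 - s) / 3)).add
    (((((hasDerivAt_id t).const_mul (2 - s)).add_const (1 + s)).div_const 3).mul
      (((hpow (s - 1)).const_mul s).const_sub s))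
    |>.sub (((hasDerivAt_id t).sub_const 1).const_mul (s * (1 - s)))
  refine h.congr_deriv ?_
  rw [show s - 1 - 1 = s - 2 by ring]
  simp only [holderDefectDeriv2, id_eq, mul_one, mul_neg]
  ring

lemma hasDerivAt_holderDefectDeriv2 (ht : 0 < t) :
    HasDerivAt (holderDefectDeriv2 s)
      (s * (1 - s) * (2 - s) * (1 + s) / 3 * t ^ (s - 3) * (t - 1)) t := by
  have hpow (r : ℝ) : HasDerivAt (fun x : ℝ ↦ x ^ r) (r * t ^ (r - 1)) t :=
    hasDerivAt_rpow_const (Or.inl ht.ne')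
  have h := ((((hpow (s - 1)).const_mul s).const_sub s).const_mul (2 * (2 - s) / 3)).add
    ((((((hasDerivAt_id t).const_mul (2 - s)).add_const (1 + s)).div_const 3).mul
      (hpow (s - 2))).const_mul (s * (1 - s)))
    |>.sub_const (s * (1 - s))
  refine h.congr_deriv ?_
  have ht2 : t ^ (s - 2) = t ^ (s - 3) * t := by
    rw [← rpow_add_one ht.ne']; ring_nf
  rw [show s - 1 - 1 = s - 2 by ring, show s - 2 - 1 = s - 3 by ring, ht2]
  simp only [id_eq, mul_one, mul_neg]
  ring

lemma holderDefect_nonneg (hs0 : 0 < s) (hs1 : s < 1) (ht : 0 < t) : 0 ≤ holderDefect s t := by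
  have hc : 0 < s * (1 - s) * (2 - s) * (1 + s) / 3 := by
    have : 0 < 1 - s := by linarith
    have : 0 < 2 - s := by linarith
    have : 0 < 1 + s := by linarith
    positivity
  have hderiv2 : ∀ u ∈ Ioi (0 : ℝ), 0 ≤ holderDefectDeriv2 s u := by
    have h := le_of_hasDerivAt_nonpos_of_nonneg zero_lt_one
      (fun u hu ↦ hasDerivAt_holderDefectDeriv2 (s := s) hu)
      (fun u hu ↦ mul_nonpos_of_nonneg_of_nonpos (by have := hu.1; positivity) (by linarith [hu.2]))
      (fun u hu ↦ mul_nonneg (by have : (0 : ℝ) < u := lt_trans zero_lt_one hu; positivity)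
        (by linarith [mem_Ioi.1 hu]))
    have h1 : holderDefectDeriv2 s 1 = 0 := by simp only [holderDefectDeriv2, one_rpow]; ring
    exact fun u hu ↦ h1 ▸ h u hu
  have hmono : MonotoneOn (holderDefectDeriv s) (Ioi 0) :=
    monotoneOn_Ioi_of_hasDerivAt_nonneg (fun u hu ↦ hasDerivAt_holderDefectDeriv hu) hderiv2
  have hderiv1 : holderDefectDeriv s 1 = 0 := by simp [holderDefectDeriv]
  have h := le_of_hasDerivAt_nonpos_of_nonneg zero_lt_one
    (fun u hu ↦ hasDerivAt_holderDefect (s := s) hu)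
    (fun u hu ↦ hderiv1 ▸ hmono hu.1 (mem_Ioi.2 zero_lt_one) hu.2.le)
    (fun u hu ↦ hderiv1 ▸ hmono (mem_Ioi.2 zero_lt_one) (mem_Ioi.2 (lt_trans zero_lt_one hu)) hu.le)
    t ht
  simpa [holderDefect] using h

end

lemma sq_div_le_arith_mean_sub_geom_mean_weighted {s x y : ℝ} (hs0 : 0 < s) (hs1 : s < 1)
    (hx : 0 < x) (hy : 0 < y) :
    s * (1 - s) / 2 * ((x - y) ^ 2 / ((2 - s) / 3 * x + (1 + s) / 3 * y))
      ≤ s * x + (1 - s) * y - x ^ s * y ^ (1 - s) := by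
  have hD : 0 < (2 - s) / 3 * x + (1 + s) / 3 * y := by nlinarith
  have hscale : holderDefect s (x / y) * y ^ 2
      = (s * x + (1 - s) * y - x ^ s * y ^ (1 - s)) * ((2 - s) / 3 * x + (1 + s) / 3 * y)
        - s * (1 - s) / 2 * (x - y) ^ 2 := by
    have hys : 0 < y ^ s := rpow_pos_of_pos hy s
    rw [holderDefect, div_rpow hx.le hy.le, rpow_sub hy, rpow_one]
    field_simp
  have h := mul_nonneg (holderDefect_nonneg hs0 hs1 (div_pos hx hy)) (sq_nonneg y)
  rw [hscale] at h
  rw [← mul_div_assoc, div_le_iff₀ hD]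
  linarith

theorem holder_stability_pointwise_sum_general
    (p q : ℝ) (hp : 1 < p) (hpq : 1/p + 1/q = 1)
    (A B : ℝ) (hA : A = (2 - 1/p)/3) (hB : B = (1 + 1/p)/3)
    (n : ℕ) (a b : Fin n → ℝ)
    (ha : ∀ k, 0 < a k) (hb : ∀ k, 0 < b k)
    (hsa : ∑ k, a k = 1) (hsb : ∑ k, b k = 1) :
    1 - ∑ k, (a k) ^ (1/p) * (b k) ^ (1/q)
      ≥ (1/(2*p*q)) * ∑ k, (a k - b k)^2 / (A * a k + B * b k) := by
  set s := 1 / p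
  have hs0 : 0 < s := one_div_pos.2 (by linarith)
  have hs1 : s < 1 := (div_lt_one (by linarith)).2 hp
  have hq : 1 / q = 1 - s := by linarith
  have hcoeff : 1 / (2 * p * q) = s * (1 - s) / 2 := by rw [← hq]; ring
  have hmean : ∑ k, (s * a k + 1 / q * b k) = 1 := by
    rw [Finset.sum_add_distrib, ← Finset.mul_sum, ← Finset.mul_sum, hsa, hsb]
    linarith
  calc 1 / (2 * p * q) * ∑ k, (a k - b k) ^ 2 / (A * a k + B * b k)
      = ∑ k, s * (1 - s) / 2 * ((a k - b k) ^ 2 / ((2 - s) / 3 * a k + (1 + s) / 3 * b k)) := by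
        rw [Finset.mul_sum, hcoeff, hA, hB]
    _ ≤ ∑ k, (s * a k + 1 / q * b k - a k ^ s * b k ^ (1 / q)) := by
        rw [hq]
        exact Finset.sum_le_sum fun k _ ↦
          sq_div_le_arith_mean_sub_geom_mean_weighted hs0 hs1 (ha k) (hb k)
    _ = 1 - ∑ k, a k ^ s * b k ^ (1 / q) := by rw [Finset.sum_sub_distrib, hmean]

theorem holder_stability_pointwise_sum
    (p q : ℝ) (hp : 1 < p) (hq : 1 < q) (hpq : 1/p + 1/q = 1)
    (A B : ℝ) (hA : A = (2 - 1/p)/3) (hB : B = (1 + 1/p)/3)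
    (n : ℕ) (hn : 0 < n) (a b : Fin n → ℝ)
    (ha : ∀ k, 0 < a k) (hb : ∀ k, 0 < b k)
    (hsa : ∑ k, a k = 1) (hsb : ∑ k, b k = 1) :
    1 - ∑ k, (a k) ^ (1/p) * (b k) ^ (1/q)
      ≥ (1/(2*p*q)) * ∑ k, (a k - b k)^2 / (A * a k + B * b k) :=
  holder_stability_pointwise_sum_general p q hp hpq A B hA hB n a b ha hb hsa hsb
end

section
/- Let p > 1, q > 1 with 1/p + 1/q = 1. For every real constant C > 1/(2pq) there exist a positive integer n and nonnegative n-tuples a_1,…,a_n and b_1,…,b_n with Σ_{k=1}^n a_k = 1, Σ_{k=1}^n b_k = 1, Σ_{k=1}^n |a_k − b_k| > 0, and 1 − Σ_{k=1}^n a_k^{1/p} b_k^{1/q} < C (Σ_{k=1}^n |a_k − b_k|)^2. In other words, the constant 1/(2pq) in the discrete L^1 stability inequality for Hölder's inequality is best possible. -/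
theorem holder_stability_constant_optimal
    (p q : ℝ) (hp : 1 < p) (hq : 1 < q) (hpq : 1/p + 1/q = 1)
    (C : ℝ) (hC : C > 1/(2*p*q)) :
    ∃ (n : ℕ) (a b : Fin n → ℝ), 0 < n ∧
      (∀ k, 0 ≤ a k) ∧ (∀ k, 0 ≤ b k) ∧
      (∑ k, a k = 1) ∧ (∑ k, b k = 1) ∧
      (∑ k, |a k - b k|) > 0 ∧
      1 - ∑ k, (a k) ^ (1/p) * (b k) ^ (1/q)
        < C * (∑ k, |a k - b k|)^2 := by
  have hp0 : (0:ℝ) < p := by linarith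
  have hq0 : (0:ℝ) < q := by linarith
  set α := 1/p with hαdef
  set β := 1/q with hβdef
  clear_value α β
  have hα : 0 < α := by rw [hαdef]; positivity
  have hβ : 0 < β := by rw [hβdef]; positivity
  have hαβ : α + β = 1 := hpq
  have hpq1 : (0:ℝ) < p * q := by positivity
  have hCpos : 0 < C := lt_trans (by positivity) hC
  have hC2 : 1 < C * (2*p*q) := by
    rw [gt_iff_lt, div_lt_iff₀ (by positivity)] at hC
    linarith
  set m := 1/(4*C*p*q) with hmdef
  clear_value m
  have hm0 : 0 < m := by rw [hmdef]; positivity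
  have hmrel : m * (4*C*p*q) = 1 := by rw [hmdef]; field_simp
  have hmhalf : m < 1/2 := by nlinarith
  set ε := (1/2 - m)/2 with hεdef
  clear_value ε
  have hε0 : 0 < ε := by rw [hεdef]; linarith
  have hεq : ε < 1/4 := by rw [hεdef]; linarith
  set y := 1/2 - ε with hydef
  set x := 1/2 + ε with hxdef
  clear_value y x
  have hy0 : (0:ℝ) < y := by rw [hydef]; linarith
  have hx0 : (0:ℝ) < x := by rw [hxdef]; linarith
  have hym : m < y := by rw [hydef, hεdef]; linarith
  have hxy1 : x + y = 1 := by rw [hxdef, hydef]; ring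
  set u := 2*ε/y with hudef
  clear_value u
  have hu0 : 0 ≤ u := by rw [hudef]; positivity
  have h1u : (0:ℝ) < 1 + u := by linarith
  have hyu : y * u = 2*ε := by rw [hudef]; field_simp [hy0.ne']
  have hxu : x = y * (1 + u) := by
    have h : y * (1 + u) = y + y * u := by ring
    rw [h, hyu, hxdef, hydef]; ring
  set v := (1+u) ^ α with hvdef
  set w := (1+u) ^ β with hwdef
  clear_value v w
  have hyαβ : y ^ α * y ^ β = y := by
    rw [← Real.rpow_add hy0, hαβ, Real.rpow_one]
  have hT1eq : x ^ α * y ^ β = y * v := by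
    rw [hxu, Real.mul_rpow hy0.le h1u.le, mul_right_comm, hyαβ, ← hvdef]
  have hT2eq : y ^ α * x ^ β = y * w := by
    rw [hxu, Real.mul_rpow hy0.le h1u.le, ← mul_assoc, hyαβ, ← hwdef]
  have hvw : v * w = 1 + u := by
    rw [hvdef, hwdef, ← Real.rpow_add h1u, hαβ, Real.rpow_one]
  have hv1 : v ≤ 1 + α * u := by
    rw [hvdef]; exact rpow_one_add_le_one_add_mul_self (by linarith) hα.le (by linarith)
  have hw1 : w ≤ 1 + β * u := by
    rw [hwdef]; exact rpow_one_add_le_one_add_mul_self (by linarith) hβ.le (by linarith)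
  have hv0 : 1 ≤ v := by rw [hvdef]; exact Real.one_le_rpow (by linarith) hα.le
  have hw0 : 1 ≤ w := by rw [hwdef]; exact Real.one_le_rpow (by linarith) hβ.le
  have hvw1 : (v - 1) * (w - 1) ≤ α * β * u ^ 2 := by
    have h := mul_le_mul (show v - 1 ≤ α * u by linarith)
      (show w - 1 ≤ β * u by linarith) (by linarith) (by positivity)
    have hring : α * u * (β * u) = α * β * u ^ 2 := by ring
    linarith
  have hdef_eq : 1 - (y * v + y * w) = y * ((v - 1) * (w - 1)) := by
    have h1eq : y * (2 + u) = 1 := by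
      have h : y * (2 + u) = y * (1 + u) + y := by ring
      rw [h, ← hxu]; linarith
    linear_combination (-y) * hvw - h1eq
  have hαβpq : α * β * (p * q) = 1 := by rw [hαdef, hβdef]; field_simp
  have hαβ4Cy : α * β < 4 * C * y := by
    have h := mul_lt_mul_of_pos_right hym (show (0:ℝ) < 4*C*p*q by positivity)
    have hring : y*(4*C*p*q) = 4 * C * y * (p*q) := by ring
    have hc : α * β * (p*q) < 4 * C * y * (p*q) := by linarith
    exact lt_of_mul_lt_mul_right hc hpq1.le
  -- main estimate
  have hmain : 1 - (x ^ α * y ^ β + y ^ α * x ^ β) < C * (2*ε + 2*ε)^2 := by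
    rw [hT1eq, hT2eq, hdef_eq]
    have hb : (y * ((v - 1) * (w - 1))) * y ≤ α * β * (2*ε)^2 := by
      have h := mul_le_mul_of_nonneg_left hvw1 (show 0 ≤ y * y by positivity)
      have h2 : y * y * (α * β * u ^ 2) = α * β * (y*u) ^ 2 := by ring
      rw [hyu] at h2
      have h3 : (y * ((v - 1) * (w - 1))) * y = y * y * ((v - 1) * (w - 1)) := by ring
      linarith
    have hr : α * β * (2*ε)^2 < (C * (2*ε + 2*ε)^2) * y := by
      have h := mul_lt_mul_of_pos_right hαβ4Cy (show (0:ℝ) < (2*ε)^2 by positivity)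
      have hring : 4 * C * y * (2*ε)^2 = (C * (2*ε + 2*ε)^2) * y := by ring
      linarith
    exact lt_of_mul_lt_mul_right (lt_of_le_of_lt hb hr) hy0.le
  refine ⟨2, ![x, y], ![y, x], by norm_num, ?_, ?_, ?_, ?_, ?_, ?_⟩
  · intro k; fin_cases k <;> simp [hx0.le, hy0.le]
  · intro k; fin_cases k <;> simp [hx0.le, hy0.le]
  · simp [Fin.sum_univ_two]; linarith
  · simp [Fin.sum_univ_two]; linarith
  · simp only [Fin.sum_univ_two, Matrix.cons_val_zero, Matrix.cons_val_one, Matrix.head_cons]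
    have h1 : x - y = 2*ε := by rw [hxdef, hydef]; ring
    have h2 : y - x = -(2*ε) := by rw [hxdef, hydef]; ring
    rw [h1, h2, abs_neg, abs_of_pos (by linarith)]
    linarith
  · simp only [Fin.sum_univ_two, Matrix.cons_val_zero, Matrix.cons_val_one, Matrix.head_cons]
    have h1 : x - y = 2*ε := by rw [hxdef, hydef]; ring
    have h2 : y - x = -(2*ε) := by rw [hxdef, hydef]; ring
    rw [h1, h2, abs_neg, abs_of_pos (by linarith)]
    exact hmain
end

section
/- Let p > 1, q > 1 with 1/p + 1/q = 1. For 0 < ε < 1 consider the probability vectors a = (1/2, 1/2) and b = ((1 + ε)/2, (1 − ε)/2). Then the quotient (1 − [(1/2)(1 + ε)^{1/q} + (1/2)(1 − ε)^{1/q}]) / ε^2, which equals (1 − Σ_k a_k^{1/p} b_k^{1/q}) / (Σ_k |a_k − b_k|)^2, tends to 1/(2pq) as ε → 0⁺. -/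
/-!
With `s = 1/q`, the numerator is `f ε = 1 - ((1 + ε)^s + (1 - ε)^s)/2`, a smooth function with
`f 0 = f' 0 = 0` and `f'' 0 = s (1 - s) = 1/(p q)`. Two applications of l'Hôpital's rule give
`f ε / ε² → f'' 0 / 2 = 1/(2 p q)`.
-/

open Filter Topology Set

theorem tendsto_div_sq_nhdsGT_zero_of_hasDerivAt {f f' f'' : ℝ → ℝ} {b L : ℝ} (hb : 0 < b)
    (hf : ∀ x ∈ Ioo 0 b, HasDerivAt f (f' x) x) (hf' : ∀ x ∈ Ioo 0 b, HasDerivAt f' (f'' x) x)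
    (hf0 : Tendsto f (𝓝[>] 0) (𝓝 0)) (hf'0 : Tendsto f' (𝓝[>] 0) (𝓝 0))
    (hf''0 : Tendsto f'' (𝓝[>] 0) (𝓝 L)) :
    Tendsto (fun x => f x / x ^ 2) (𝓝[>] 0) (𝓝 (L / 2)) := by
  have tendsto_nhdsGT {g : ℝ → ℝ} (hg : Continuous g) (hg0 : g 0 = 0) :
      Tendsto g (𝓝[>] 0) (𝓝 0) :=
    (hg.tendsto' 0 0 hg0).mono_left nhdsWithin_le_nhds
  have hf'_div : Tendsto (fun x => f' x / (2 * x)) (𝓝[>] 0) (𝓝 (L / 2)) :=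
    HasDerivAt.lhopital_zero_right_on_Ioo hb hf'
      (fun x _ => by simpa using (hasDerivAt_id x).const_mul (2 : ℝ))
      (fun _ _ => two_ne_zero) hf'0
      (tendsto_nhdsGT (g := fun x => 2 * x) (by fun_prop) (mul_zero 2))
      (hf''0.div_const 2)
  exact HasDerivAt.lhopital_zero_right_on_Ioo hb hf
    (fun x _ => by simpa using hasDerivAt_pow 2 x)
    (fun x hx => by simpa using hx.1.ne') hf0
    (tendsto_nhdsGT (g := fun x => x ^ 2) (by fun_prop) (zero_pow two_ne_zero)) hf'_div

theorem hasDerivAt_one_add_rpow_add_mul_one_sub_rpow (r c : ℝ) {x : ℝ} (hx₁ : 1 + x ≠ 0)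
    (hx₂ : 1 - x ≠ 0) :
    HasDerivAt (fun ε => (1 + ε) ^ r + c * (1 - ε) ^ r)
      (r * ((1 + x) ^ (r - 1) - c * (1 - x) ^ (r - 1))) x := by
  have h₁ := ((hasDerivAt_id x).const_add 1).rpow_const (p := r) (Or.inl hx₁)
  have h₂ := (((hasDerivAt_id x).const_sub 1).rpow_const (p := r) (Or.inl hx₂)).const_mul c
  exact (h₁.add h₂).congr_deriv (by simp only [id]; ring)

theorem tendsto_one_add_rpow_add_mul_one_sub_rpow (r c : ℝ) :
    Tendsto (fun ε : ℝ => (1 + ε) ^ r + c * (1 - ε) ^ r) (𝓝 0) (𝓝 (1 + c)) := by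
  have hcont : ContinuousAt (fun ε : ℝ => (1 + ε) ^ r + c * (1 - ε) ^ r) 0 := by
    refine ContinuousAt.add ?_ (continuousAt_const.mul ?_) <;>
      exact ContinuousAt.rpow_const (by fun_prop) (Or.inl (by norm_num))
  simpa using hcont.tendsto

theorem holder_stability_quotient_limit_general
    (p q : ℝ) (hpq : 1/p + 1/q = 1) :
    Filter.Tendsto
      (fun ε : ℝ =>
        (1 - ((1/2) * (1 + ε) ^ (1/q) + (1/2) * (1 - ε) ^ (1/q))) / ε^2)
      (nhdsWithin 0 (Set.Ioo 0 1))
      (nhds (1/(2*p*q))) := by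
  set s := 1 / q
  have hbase : ∀ x ∈ Ioo (0 : ℝ) 1, 1 + x ≠ 0 ∧ 1 - x ≠ 0 := fun x hx =>
    ⟨by linarith [hx.1], by linarith [hx.2]⟩
  have hderiv (r c : ℝ) (x : ℝ) (hx : x ∈ Ioo 0 1) :=
    hasDerivAt_one_add_rpow_add_mul_one_sub_rpow r c (hbase x hx).1 (hbase x hx).2
  have hlim (r c : ℝ) := (tendsto_one_add_rpow_add_mul_one_sub_rpow r c).mono_left
    (nhdsWithin_le_nhds (s := Ioi 0))
  have hf (x) (hx : x ∈ Ioo 0 1) :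
      HasDerivAt (fun ε => 1 - (1 / 2) * ((1 + ε) ^ s + 1 * (1 - ε) ^ s))
        (-(s / 2) * ((1 + x) ^ (s - 1) + -1 * (1 - x) ^ (s - 1))) x :=
    (((hderiv s 1 x hx).const_mul (1 / 2)).const_sub 1).congr_deriv (by ring)
  have hf' (x) (hx : x ∈ Ioo 0 1) :
      HasDerivAt (fun ε => -(s / 2) * ((1 + ε) ^ (s - 1) + -1 * (1 - ε) ^ (s - 1)))
        (-(s / 2) * ((s - 1) * ((1 + x) ^ (s - 1 - 1) - -1 * (1 - x) ^ (s - 1 - 1)))) x :=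
    (hderiv (s - 1) (-1) x hx).const_mul _
  have hL : -(s / 2) * ((s - 1) * (1 - -1)) / 2 = 1 / (2 * p * q) := by
    rw [show s - 1 = -(1 / p) by linarith]
    ring
  rw [nhdsWithin_Ioo_eq_nhdsGT one_pos, ← hL]
  refine (tendsto_div_sq_nhdsGT_zero_of_hasDerivAt one_pos hf hf' ?_ ?_ ?_).congr
    (fun ε => by ring)
  · convert ((hlim s 1).const_mul (1 / 2)).const_sub 1 using 2
    norm_num
  · simpa using (hlim (s - 1) (-1)).const_mul (-(s / 2))
  · simpa using ((hlim (s - 1 - 1) 1).const_mul (s - 1)).const_mul (-(s / 2))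

theorem holder_stability_quotient_limit
    (p q : ℝ) (hp : 1 < p) (hq : 1 < q) (hpq : 1/p + 1/q = 1) :
    Filter.Tendsto
      (fun ε : ℝ =>
        (1 - ((1/2) * (1 + ε) ^ (1/q) + (1/2) * (1 - ε) ^ (1/q))) / ε^2)
      (nhdsWithin 0 (Set.Ioo 0 1))
      (nhds (1/(2*p*q))) :=
  holder_stability_quotient_limit_general p q hpq
end

section
/- Let (X, 𝒜, μ) be a measure space and let p > 1, q > 1 with 1/p + 1/q = 1. If f, g : X → ℝ are nonnegative integrable functions with ∫_X f dμ = 1 and ∫_X g dμ = 1, then 1 − ∫_X f^{1/p} g^{1/q} dμ ≥ (1/(2pq)) (∫_X |f − g| dμ)^2. -/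
/-!
Split `X` along `A = {g < f}` and put `α = ∫_A f`, `β = ∫_A g`, `l = 1/q`. Hölder's inequality on
`A` and on `Aᶜ` bounds `∫ f^(1-l) g^l` by the two-point affinity
`α^(1-l) β^l + (1-α)^(1-l) (1-β)^l`, while `∫ |f - g| = 2 (α - β)`. So everything reduces to the
two-point inequality `a^(1-l) b^l + (1-a)^(1-l) (1-b)^l + 2 l (1-l) (a-b)^2 ≤ 1`. Its `a`-derivative
vanishes at `a = b` and is monotone in `b`, because the mixed second derivative is
`l (1-l) (a^(-l) b^(l-1) + (1-a)^(-l) (1-b)^(l-1) - 4)`, nonnegative by AM-GM since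
`u (1-u) ≤ 1/4`.
-/

open MeasureTheory Real Set

lemma four_rpow_le_mul_one_sub_rpow_neg {u r : ℝ} (hu0 : 0 < u) (hu1 : u < 1) (hr : 0 ≤ r) :
    (4 : ℝ) ^ r ≤ (u * (1 - u)) ^ (-r) := by
  have hpos : 0 < u * (1 - u) := mul_pos hu0 (by linarith)
  rw [rpow_neg hpos.le, ← inv_rpow hpos.le]
  gcongr
  exact (le_inv_comm₀ four_pos hpos).2 (by nlinarith [sq_nonneg (u - 1 / 2)])

lemma four_le_rpow_neg_mul_rpow_add {l u v : ℝ} (hl0 : 0 ≤ l) (hl1 : l ≤ 1)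
    (hu0 : 0 < u) (hu1 : u < 1) (hv0 : 0 < v) (hv1 : v < 1) :
    4 ≤ u ^ (-l) * v ^ (l - 1) + (1 - u) ^ (-l) * (1 - v) ^ (l - 1) := by
  have hu' : 0 < 1 - u := by linarith
  have hv' : 0 < 1 - v := by linarith
  set A := u ^ (-l) * v ^ (l - 1)
  set B := (1 - u) ^ (-l) * (1 - v) ^ (l - 1)
  have hA : 0 < A := by positivity
  have hB : 0 < B := by positivity
  have hAB : 4 ≤ A * B := calc
    (4 : ℝ) = 4 ^ l * 4 ^ (1 - l) := by rw [← rpow_add four_pos]; norm_num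
    _ ≤ (u * (1 - u)) ^ (-l) * (v * (1 - v)) ^ (-(1 - l)) := by
      gcongr
      · exact four_rpow_le_mul_one_sub_rpow_neg hu0 hu1 hl0
      · exact four_rpow_le_mul_one_sub_rpow_neg hv0 hv1 (by linarith)
    _ = A * B := by
      rw [mul_rpow hu0.le hu'.le, mul_rpow hv0.le hv'.le, neg_sub]; ring
  nlinarith [sq_nonneg (A - B)]

noncomputable def bernoulliAffinity (l a b : ℝ) : ℝ :=
  a ^ (1 - l) * b ^ l + (1 - a) ^ (1 - l) * (1 - b) ^ l

lemma bernoulliAffinity_one_sub (l a b : ℝ) :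
    bernoulliAffinity l (1 - a) (1 - b) = bernoulliAffinity l a b := by
  simp only [bernoulliAffinity, sub_sub_cancel]; ring

lemma bernoulliAffinity_self {l b : ℝ} (hb0 : 0 ≤ b) (hb1 : b ≤ 1) :
    bernoulliAffinity l b b = 1 := by
  have h {x : ℝ} (hx : 0 ≤ x) : x ^ (1 - l) * x ^ l = x := by
    rw [← rpow_add' hx (by norm_num), sub_add_cancel, rpow_one]
  simp only [bernoulliAffinity, h hb0, h (sub_nonneg.2 hb1)]; ring

lemma hasDerivAt_bernoulliAffinity_left {l a b : ℝ} (ha0 : 0 < a) (ha1 : a < 1) :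
    HasDerivAt (fun t => bernoulliAffinity l t b)
      ((1 - l) * (a ^ (-l) * b ^ l - (1 - a) ^ (-l) * (1 - b) ^ l)) a := by
  have h1 := (hasDerivAt_id' a).rpow_const (p := 1 - l) (Or.inl ha0.ne')
  have h2 := ((hasDerivAt_id' a).const_sub 1).rpow_const (p := 1 - l) (Or.inl (by linarith))
  refine ((h1.mul_const (b ^ l)).add (h2.mul_const ((1 - b) ^ l))).congr_deriv ?_
  rw [sub_sub_cancel_left]; ring

lemma bernoulliAffinity_deriv_le {l a b : ℝ} (hl0 : 0 < l) (hl1 : l < 1) (ha0 : 0 < a)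
    (ha1 : a < 1) (hb0 : 0 ≤ b) (hba : b ≤ a) :
    (1 - l) * (a ^ (-l) * b ^ l - (1 - a) ^ (-l) * (1 - b) ^ l) ≤ 4 * l * (1 - l) * (b - a) := by
  set F : ℝ → ℝ := fun t =>
    (1 - l) * (a ^ (-l) * t ^ l - (1 - a) ^ (-l) * (1 - t) ^ l) + 4 * l * (1 - l) * (a - t)
  have hF' : ∀ t ∈ Ioo (0 : ℝ) 1, HasDerivAt F
      (l * (1 - l) * (a ^ (-l) * t ^ (l - 1) + (1 - a) ^ (-l) * (1 - t) ^ (l - 1) - 4)) t := by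
    rintro t ⟨ht0, ht1⟩
    have h1 := (hasDerivAt_id' t).rpow_const (p := l) (Or.inl ht0.ne')
    have h2 := ((hasDerivAt_id' t).const_sub 1).rpow_const (p := l) (Or.inl (by linarith))
    refine ((((h1.const_mul _).sub (h2.const_mul _)).const_mul _).add
      (((hasDerivAt_id' t).const_sub a).const_mul _)).congr_deriv ?_
    ring
  have hmono : MonotoneOn F (Icc 0 a) := by
    refine monotoneOn_of_hasDerivWithinAt_nonneg (convex_Icc 0 a)
      (Continuous.continuousOn (by fun_prop (disch := positivity)))
      (fun t ht => (hF' t ?_).hasDerivWithinAt) (fun t ht => ?_)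
    · rw [interior_Icc] at ht
      exact ⟨ht.1, ht.2.trans ha1⟩
    · rw [interior_Icc] at ht
      have := four_le_rpow_neg_mul_rpow_add hl0.le hl1.le ha0 ha1 ht.1 (ht.2.trans ha1)
      have : 0 ≤ l * (1 - l) := mul_nonneg hl0.le (by linarith)
      nlinarith
  have hFa : F a = 0 := by
    simp only [F, ← rpow_add ha0, ← rpow_add (sub_pos.2 ha1), neg_add_cancel, rpow_zero]
    ring
  have := hmono ⟨hb0, hba⟩ ⟨hb0.trans hba, le_rfl⟩ hba
  simp only [F] at this hFa
  linarith

lemma bernoulliAffinity_add_le_one_of_le {l a b : ℝ} (hl0 : 0 < l) (hl1 : l < 1)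
    (hb0 : 0 ≤ b) (hba : b ≤ a) (ha1 : a ≤ 1) :
    bernoulliAffinity l a b + 2 * l * (1 - l) * (a - b) ^ 2 ≤ 1 := by
  set G : ℝ → ℝ := fun t => bernoulliAffinity l t b + 2 * l * (1 - l) * (t - b) ^ 2
  have hanti : AntitoneOn G (Icc b 1) := by
    refine antitoneOn_of_hasDerivWithinAt_nonpos (convex_Icc b 1) ?_
      (fun t ht => ?_) (fun t ht => ?_)
      (f' := fun t => (1 - l) * (t ^ (-l) * b ^ l - (1 - t) ^ (-l) * (1 - b) ^ l)
        + 4 * l * (1 - l) * (t - b))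
    · simp only [G, bernoulliAffinity]
      exact Continuous.continuousOn (by fun_prop (disch := linarith))
    · rw [interior_Icc] at ht
      refine ((hasDerivAt_bernoulliAffinity_left (hb0.trans_lt ht.1) ht.2).add
        ((((hasDerivAt_id' t).sub_const b).pow 2).const_mul _)).hasDerivWithinAt.congr_deriv ?_
      ring
    · rw [interior_Icc] at ht
      have := bernoulliAffinity_deriv_le hl0 hl1 (hb0.trans_lt ht.1) ht.2 hb0 ht.1.le
      linarith
  calc bernoulliAffinity l a b + 2 * l * (1 - l) * (a - b) ^ 2 = G a := rfl
    _ ≤ G b := hanti ⟨le_rfl, hba.trans ha1⟩ ⟨hba, ha1⟩ hba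
    _ = 1 := by simp [G, bernoulliAffinity_self hb0 (hba.trans ha1)]

lemma bernoulliAffinity_add_le_one {l a b : ℝ} (hl0 : 0 < l) (hl1 : l < 1)
    (ha0 : 0 ≤ a) (ha1 : a ≤ 1) (hb0 : 0 ≤ b) (hb1 : b ≤ 1) :
    bernoulliAffinity l a b + 2 * l * (1 - l) * (a - b) ^ 2 ≤ 1 := by
  rcases le_total b a with hba | hab
  · exact bernoulliAffinity_add_le_one_of_le hl0 hl1 hb0 hba ha1
  · have := bernoulliAffinity_add_le_one_of_le hl0 hl1 (sub_nonneg.2 hb1)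
      (sub_le_sub_left hab 1) (sub_le_self 1 ha0)
    rw [bernoulliAffinity_one_sub] at this
    linarith [show (1 - b - (1 - a)) ^ 2 = (a - b) ^ 2 by ring]

section Integral

variable {X : Type*} [MeasurableSpace X] {μ : Measure X} {f g : X → ℝ} {a b : ℝ}

lemma integrable_rpow_mul_rpow (hf : 0 ≤ᵐ[μ] f) (hg : 0 ≤ᵐ[μ] g) (hfi : Integrable f μ)
    (hgi : Integrable g μ) (ha : 0 ≤ a) (hb : 0 ≤ b) (hab : a + b = 1) :
    Integrable (fun x => f x ^ a * g x ^ b) μ := by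
  refine ((hfi.const_mul a).add (hgi.const_mul b)).mono'
    ((hfi.aemeasurable.pow_const a).mul (hgi.aemeasurable.pow_const b)).aestronglyMeasurable ?_
  filter_upwards [hf, hg] with x hfx hgx
  rw [norm_of_nonneg (mul_nonneg (rpow_nonneg hfx a) (rpow_nonneg hgx b))]
  exact geom_mean_le_arith_mean2_weighted ha hb hfx hgx hab

lemma integral_rpow_mul_rpow_le (hf : 0 ≤ᵐ[μ] f) (hg : 0 ≤ᵐ[μ] g) (hfi : Integrable f μ)
    (hgi : Integrable g μ) (ha : 0 ≤ a) (hb : 0 ≤ b) (hab : a + b = 1) :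
    ∫ x, f x ^ a * g x ^ b ∂μ ≤ (∫ x, f x ∂μ) ^ a * (∫ x, g x ∂μ) ^ b := by
  have hP : 0 ≤ᵐ[μ] fun x => f x ^ a * g x ^ b := by
    filter_upwards [hf, hg] with x hfx hgx
    exact mul_nonneg (rpow_nonneg hfx a) (rpow_nonneg hgx b)
  have hF := integral_nonneg_of_ae hf
  have hG := integral_nonneg_of_ae hg
  have h := ENNReal.lintegral_mul_norm_pow_le hfi.aemeasurable.ennreal_ofReal
    hgi.aemeasurable.ennreal_ofReal ha hb hab
  have hlhs : ∫⁻ x, ENNReal.ofReal (f x) ^ a * ENNReal.ofReal (g x) ^ b ∂μ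
      = ∫⁻ x, ENNReal.ofReal (f x ^ a * g x ^ b) ∂μ := by
    refine lintegral_congr_ae ?_
    filter_upwards [hf, hg] with x hfx hgx
    rw [ENNReal.ofReal_mul (rpow_nonneg hfx a), ENNReal.ofReal_rpow_of_nonneg hfx ha,
      ENNReal.ofReal_rpow_of_nonneg hgx hb]
  rw [hlhs, ← ofReal_integral_eq_lintegral_ofReal hfi hf,
    ← ofReal_integral_eq_lintegral_ofReal hgi hg,
    ← ofReal_integral_eq_lintegral_ofReal (integrable_rpow_mul_rpow hf hg hfi hgi ha hb hab) hP,
    ENNReal.ofReal_rpow_of_nonneg hF ha, ENNReal.ofReal_rpow_of_nonneg hG hb,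
    ← ENNReal.ofReal_mul (rpow_nonneg hF a)] at h
  exact (ENNReal.ofReal_le_ofReal_iff (by positivity)).1 h

lemma integral_abs_sub_eq_two_mul (hfi : Integrable f μ) (hgi : Integrable g μ)
    (hfg : ∫ x, f x ∂μ = ∫ x, g x ∂μ) :
    ∫ x, |f x - g x| ∂μ
      = 2 * (∫ x in {x | g x < f x}, f x ∂μ - ∫ x in {x | g x < f x}, g x ∂μ) := by
  set A := {x | g x < f x}
  have hA : NullMeasurableSet A μ := nullMeasurableSet_lt hgi.aemeasurable hfi.aemeasurable
  have hAc : ∫ x in Aᶜ, |f x - g x| ∂μ = ∫ x in Aᶜ, g x ∂μ - ∫ x in Aᶜ, f x ∂μ := by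
    rw [← integral_sub hgi.integrableOn hfi.integrableOn]
    refine setIntegral_congr_fun₀ hA.compl fun x (hx : ¬g x < f x) => ?_
    rw [abs_of_nonpos (sub_nonpos.2 (not_lt.1 hx)), neg_sub]
  have hA' : ∫ x in A, |f x - g x| ∂μ = ∫ x in A, f x ∂μ - ∫ x in A, g x ∂μ := by
    rw [← integral_sub hfi.integrableOn hgi.integrableOn]
    exact setIntegral_congr_fun₀ hA fun x hx => abs_of_pos (sub_pos.2 hx)
  rw [← integral_add_compl₀ (f := fun x => |f x - g x|) hA (hfi.sub hgi).abs, hA', hAc]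
  have := integral_add_compl₀ hA hfi
  have := integral_add_compl₀ hA hgi
  linarith

lemma mul_sq_integral_abs_sub_le_one_sub_integral_rpow_mul_rpow {l : ℝ} (hl0 : 0 < l)
    (hl1 : l < 1) (hf : 0 ≤ᵐ[μ] f) (hg : 0 ≤ᵐ[μ] g) (hfi : Integrable f μ) (hgi : Integrable g μ)
    (hfs : ∫ x, f x ∂μ = 1) (hgs : ∫ x, g x ∂μ = 1) :
    l * (1 - l) / 2 * (∫ x, |f x - g x| ∂μ) ^ 2 ≤ 1 - ∫ x, f x ^ (1 - l) * g x ^ l ∂μ := by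
  set A := {x | g x < f x}
  have hA : NullMeasurableSet A μ := nullMeasurableSet_lt hgi.aemeasurable hfi.aemeasurable
  have hholder (s : Set X) : ∫ x in s, f x ^ (1 - l) * g x ^ l ∂μ
      ≤ (∫ x in s, f x ∂μ) ^ (1 - l) * (∫ x in s, g x ∂μ) ^ l :=
    integral_rpow_mul_rpow_le (ae_restrict_of_ae hf) (ae_restrict_of_ae hg) hfi.restrict
      hgi.restrict (by linarith) hl0.le (by ring)
  have hmass (h : X → ℝ) (hh : 0 ≤ᵐ[μ] h) (hhi : Integrable h μ) (hhs : ∫ x, h x ∂μ = 1) :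
      ∫ x in Aᶜ, h x ∂μ = 1 - ∫ x in A, h x ∂μ ∧ 0 ≤ ∫ x in A, h x ∂μ ∧ ∫ x in A, h x ∂μ ≤ 1 := by
    have := integral_add_compl₀ hA hhi
    have hAc : 0 ≤ ∫ x in Aᶜ, h x ∂μ := integral_nonneg_of_ae (ae_restrict_of_ae hh)
    exact ⟨by linarith, integral_nonneg_of_ae (ae_restrict_of_ae hh), by linarith⟩
  obtain ⟨hfc, hα0, hα1⟩ := hmass f hf hfi hfs
  obtain ⟨hgc, hβ0, hβ1⟩ := hmass g hg hgi hgs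
  have hHolderA := hholder A
  have hHolderAc := hholder Aᶜ
  rw [hfc, hgc] at hHolderAc
  have hP := integral_add_compl₀ hA
    (integrable_rpow_mul_rpow (a := 1 - l) hf hg hfi hgi (by linarith) hl0.le (by ring))
  have hbin := bernoulliAffinity_add_le_one hl0 hl1 hα0 hα1 hβ0 hβ1
  rw [integral_abs_sub_eq_two_mul hfi hgi (hfs.trans hgs.symm)]
  unfold bernoulliAffinity at hbin
  linarith

end Integral

theorem holder_L1_stability_integral_general
    {X : Type*} [MeasurableSpace X] (μ : Measure X)
    (p q : ℝ) (hq : 1 < q) (hpq : 1/p + 1/q = 1)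
    (f g : X → ℝ) (hf : 0 ≤ f) (hg : 0 ≤ g)
    (hfi : Integrable f μ) (hgi : Integrable g μ)
    (hfs : ∫ x, f x ∂μ = 1) (hgs : ∫ x, g x ∂μ = 1) :
    1 - ∫ x, (f x) ^ (1/p) * (g x) ^ (1/q) ∂μ
      ≥ (1/(2*p*q)) * (∫ x, |f x - g x| ∂μ)^2 := by
  have hp' : 1 / p = 1 - 1 / q := by linarith
  have hconst : 1 / (2 * p * q) = 1 / q * (1 - 1 / q) / 2 := by
    rw [← hp']; field_simp
  rw [ge_iff_le, hconst, hp']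
  exact mul_sq_integral_abs_sub_le_one_sub_integral_rpow_mul_rpow (by positivity)
    ((div_lt_one (by positivity)).2 hq) (ae_of_all μ hf) (ae_of_all μ hg) hfi hgi hfs hgs

theorem holder_L1_stability_integral
    {X : Type*} [MeasurableSpace X] (μ : Measure X)
    (p q : ℝ) (hp : 1 < p) (hq : 1 < q) (hpq : 1/p + 1/q = 1)
    (f g : X → ℝ) (hf : 0 ≤ f) (hg : 0 ≤ g)
    (hfi : Integrable f μ) (hgi : Integrable g μ)
    (hfs : ∫ x, f x ∂μ = 1) (hgs : ∫ x, g x ∂μ = 1) :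
    1 - ∫ x, (f x) ^ (1/p) * (g x) ^ (1/q) ∂μ
      ≥ (1/(2*p*q)) * (∫ x, |f x - g x| ∂μ)^2 :=
  holder_L1_stability_integral_general μ p q hq hpq f g hf hg hfi hgi hfs hgs
end

section
/- Let (X, 𝒜, μ) be a measure space and let p > 1, q > 1 with 1/p + 1/q = 1; set A = (2 − 1/p)/3 and B = (1 + 1/p)/3. If f, g : X → ℝ are nonnegative integrable functions with ∫_X f dμ = 1 and ∫_X g dμ = 1, then 1 − ∫_X f^{1/p} g^{1/q} dμ ≥ (1/(2pq)) ∫_X (f − g)^2 / (A·f + B·g) dμ, where the integrand on the right is interpreted as 0 at points where f = g = 0. -/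
/-!
With `s = 1/p`, so that `1 - s = 1/q`, it suffices to integrate the pointwise inequality
`s(1-s)/2 · (a-b)² / ((2-s)/3 · a + (1+s)/3 · b) ≤ s a + (1-s) b - a^s b^(1-s)` for `a, b ≥ 0`.
By homogeneity (`t = a/b`) this reduces to `stabilityGap s t ≥ 0` for `t ≥ 0`. That function
vanishes together with its derivative at `t = 1`, and it is convex: its second derivative is
`s(1+s)/3 · (1 + (1-s) t^(s-2) - (2-s) t^(s-1))`, which is nonnegative by weighted AM-GM.
-/

open MeasureTheory Real Set

lemma two_sub_mul_rpow_sub_one_le {s t : ℝ} (hs : s ≤ 1) (ht : 0 < t) :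
    (2 - s) * t ^ (s - 1) ≤ 1 + (1 - s) * t ^ (s - 2) := by
  have h2s : 0 < 2 - s := by linarith
  -- weighted AM-GM of `1` and `t ^ (s - 2)` with weights `1 / (2 - s)` and `(1 - s) / (2 - s)`
  have amgm := geom_mean_le_arith_mean2_weighted (div_nonneg zero_le_one h2s.le)
    (div_nonneg (sub_nonneg.2 hs) h2s.le) zero_le_one (rpow_nonneg ht.le (s - 2))
    (by field_simp; ring)
  have hpow : (t ^ (s - 2)) ^ ((1 - s) / (2 - s)) = t ^ (s - 1) := by
    rw [← rpow_mul ht.le]; congr 1; field_simp; ring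
  rw [one_rpow, one_mul, hpow] at amgm
  calc (2 - s) * t ^ (s - 1) ≤ (2 - s) * (1 / (2 - s) * 1 + (1 - s) / (2 - s) * t ^ (s - 2)) :=
        mul_le_mul_of_nonneg_left amgm h2s.le
    _ = 1 + (1 - s) * t ^ (s - 2) := by field_simp

lemma hasDerivAt_amgm_gap (s : ℝ) {t : ℝ} (ht : 0 < t) :
    HasDerivAt (fun t : ℝ => s * t + (1 - s) - t ^ s) (s - s * t ^ (s - 1)) t := by
  have hlin : HasDerivAt (fun t : ℝ => s * t + (1 - s)) s t := by
    simpa using ((hasDerivAt_id t).const_mul s).add_const (1 - s)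
  exact hlin.sub (hasDerivAt_rpow_const (Or.inl ht.ne'))

noncomputable def stabilityGap (s t : ℝ) : ℝ :=
  (s * t + (1 - s) - t ^ s) * ((2 - s) / 3 * t + (1 + s) / 3) - s * (1 - s) / 2 * (t - 1) ^ 2

noncomputable def stabilityGapDeriv (s t : ℝ) : ℝ :=
  (s - s * t ^ (s - 1)) * ((2 - s) / 3 * t + (1 + s) / 3)
    + (s * t + (1 - s) - t ^ s) * ((2 - s) / 3) - s * (1 - s) * (t - 1)

lemma hasDerivAt_stabilityGap (s : ℝ) {t : ℝ} (ht : 0 < t) :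
    HasDerivAt (stabilityGap s) (stabilityGapDeriv s t) t := by
  have hlin : HasDerivAt (fun t : ℝ => (2 - s) / 3 * t + (1 + s) / 3) ((2 - s) / 3) t := by
    simpa using ((hasDerivAt_id t).const_mul ((2 - s) / 3)).add_const ((1 + s) / 3)
  have hamgm := hasDerivAt_amgm_gap s ht
  have hsq :
      HasDerivAt (fun t : ℝ => s * (1 - s) / 2 * (t - 1) ^ 2) (s * (1 - s) * (t - 1)) t := by
    refine ((((hasDerivAt_id t).sub_const 1).pow 2).const_mul (s * (1 - s) / 2)).congr_deriv ?_
    simp only [id_eq]; push_cast; ring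
  exact (hamgm.mul hlin).sub hsq

lemma hasDerivAt_stabilityGapDeriv (s : ℝ) {t : ℝ} (ht : 0 < t) :
    HasDerivAt (stabilityGapDeriv s)
      (s * (1 + s) / 3 * (1 + (1 - s) * t ^ (s - 2) - (2 - s) * t ^ (s - 1))) t := by
  have hlin : HasDerivAt (fun t : ℝ => (2 - s) / 3 * t + (1 + s) / 3) ((2 - s) / 3) t := by
    simpa using ((hasDerivAt_id t).const_mul ((2 - s) / 3)).add_const ((1 + s) / 3)
  have hpow : HasDerivAt (fun t : ℝ => t ^ (s - 1)) ((s - 1) * t ^ (s - 2)) t := by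
    convert hasDerivAt_rpow_const (p := s - 1) (Or.inl ht.ne') using 3; ring
  have hamgm := hasDerivAt_amgm_gap s ht
  have hlin' : HasDerivAt (fun t : ℝ => s * (1 - s) * (t - 1)) (s * (1 - s)) t := by
    simpa using ((hasDerivAt_id t).sub_const 1).const_mul (s * (1 - s))
  refine ((((hpow.const_mul s).const_sub s).mul hlin).add
    (hamgm.mul_const ((2 - s) / 3)) |>.sub hlin').congr_deriv ?_
  have e : t ^ (s - 2) * t = t ^ (s - 1) := by
    rw [← rpow_add_one ht.ne']; congr 1; ring
  linear_combination (s * (2 / 3) - s ^ 2 + s ^ 3 * (1 / 3)) * e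

lemma convexOn_stabilityGap {s : ℝ} (hs0 : 0 ≤ s) (hs1 : s ≤ 1) :
    ConvexOn ℝ (Ici 0) (stabilityGap s) := by
  refine convexOn_of_hasDerivWithinAt2_nonneg (convex_Ici 0) ?_
    (fun t ht => (hasDerivAt_stabilityGap s (by simpa using ht)).hasDerivWithinAt)
    (fun t ht => (hasDerivAt_stabilityGapDeriv s (by simpa using ht)).hasDerivWithinAt) ?_
  · unfold stabilityGap; fun_prop (disch := exact hs0)
  · intro t ht
    have := two_sub_mul_rpow_sub_one_le hs1 (show 0 < t by simpa using ht)
    have : 0 ≤ s * (1 + s) / 3 := by positivity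
    nlinarith

lemma stabilityGap_nonneg {s t : ℝ} (hs0 : 0 ≤ s) (hs1 : s ≤ 1) (ht : 0 ≤ t) :
    0 ≤ stabilityGap s t := by
  have hmin : IsMinOn (stabilityGap s) (Ici 0) 1 := by
    refine (convexOn_stabilityGap hs0 hs1).isMinOn_of_rightDeriv_eq_zero (by simp) ?_
    have := (hasDerivAt_stabilityGap s one_pos).hasDerivWithinAt (s := Ioi 1)
    rw [this.derivWithin (uniqueDiffWithinAt_Ioi 1)]
    simp [stabilityGapDeriv]
  simpa [stabilityGap] using hmin (mem_Ici.2 ht)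

lemma half_mul_sq_sub_le_amgm_gap_mul {s a b : ℝ} (hs0 : 0 ≤ s) (hs1 : s < 1)
    (ha : 0 ≤ a) (hb : 0 ≤ b) :
    s * (1 - s) / 2 * (a - b) ^ 2
      ≤ (s * a + (1 - s) * b - a ^ s * b ^ (1 - s)) * ((2 - s) / 3 * a + (1 + s) / 3 * b) := by
  rcases hb.eq_or_lt with rfl | hb
  · rw [zero_rpow (by linarith)]
    nlinarith [mul_nonneg hs0 (sq_nonneg a)]
  · -- homogeneity: the difference of the two sides is `b ^ 2 * stabilityGap s (a / b)`
    have hdiv : (a / b) ^ s = a ^ s / b ^ s := div_rpow ha hb.le s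
    have hsub : b ^ (1 - s) = b / b ^ s := by
      rw [rpow_sub hb, rpow_one]
    have hgap := mul_nonneg (sq_nonneg b) (stabilityGap_nonneg hs0 hs1.le (div_nonneg ha hb.le))
    rw [stabilityGap, hdiv] at hgap
    rw [hsub]
    have hbs : 0 < b ^ s := rpow_pos_of_pos hb s
    field_simp at hgap ⊢
    linarith

lemma mul_sq_sub_div_le_amgm_gap {s a b : ℝ} (hs0 : 0 ≤ s) (hs1 : s < 1)
    (ha : 0 ≤ a) (hb : 0 ≤ b) :
    s * (1 - s) / 2 * ((a - b) ^ 2 / ((2 - s) / 3 * a + (1 + s) / 3 * b))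
      ≤ s * a + (1 - s) * b - a ^ s * b ^ (1 - s) := by
  rw [mul_div_assoc']
  refine div_le_of_le_mul₀ (by nlinarith) ?_ (half_mul_sq_sub_le_amgm_gap_mul hs0 hs1 ha hb)
  exact sub_nonneg.2 (geom_mean_le_arith_mean2_weighted hs0 (by linarith) ha hb (by ring))

lemma integrable_rpow_mul_rpow_one_sub {X : Type*} [MeasurableSpace X] {μ : Measure X}
    {s : ℝ} (hs0 : 0 ≤ s) (hs1 : s ≤ 1) {f g : X → ℝ} (hf : 0 ≤ f) (hg : 0 ≤ g)
    (hfi : Integrable f μ) (hgi : Integrable g μ) :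
    Integrable (fun x => f x ^ s * g x ^ (1 - s)) μ := by
  refine ((hfi.const_mul s).add (hgi.const_mul (1 - s))).mono' ?_ (ae_of_all _ fun x => ?_)
  · exact ((continuous_rpow_const hs0).comp_aestronglyMeasurable hfi.aestronglyMeasurable).mul
      ((continuous_rpow_const (by linarith)).comp_aestronglyMeasurable hgi.aestronglyMeasurable)
  · rw [norm_of_nonneg (mul_nonneg (rpow_nonneg (hf x) s) (rpow_nonneg (hg x) (1 - s)))]
    exact geom_mean_le_arith_mean2_weighted hs0 (by linarith) (hf x) (hg x) (by ring)

theorem mul_integral_sq_sub_div_le {X : Type*} [MeasurableSpace X] {μ : Measure X}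
    {s : ℝ} (hs0 : 0 ≤ s) (hs1 : s < 1) {f g : X → ℝ} (hf : 0 ≤ f) (hg : 0 ≤ g)
    (hfi : Integrable f μ) (hgi : Integrable g μ) :
    s * (1 - s) / 2 * ∫ x, (f x - g x) ^ 2 / ((2 - s) / 3 * f x + (1 + s) / 3 * g x) ∂μ
      ≤ s * ∫ x, f x ∂μ + (1 - s) * ∫ x, g x ∂μ - ∫ x, f x ^ s * g x ^ (1 - s) ∂μ := by
  have hmean : Integrable (fun x => s * f x + (1 - s) * g x) μ :=
    (hfi.const_mul s).add (hgi.const_mul (1 - s))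
  rw [← integral_const_mul, ← integral_const_mul, ← integral_const_mul,
    ← integral_add (hfi.const_mul s) (hgi.const_mul (1 - s)),
    ← integral_sub hmean (integrable_rpow_mul_rpow_one_sub hs0 hs1.le hf hg hfi hgi)]
  refine integral_mono_of_nonneg (ae_of_all _ fun x => ?_)
    (hmean.sub (integrable_rpow_mul_rpow_one_sub hs0 hs1.le hf hg hfi hgi))
    (ae_of_all _ fun x => mul_sq_sub_div_le_amgm_gap hs0 hs1 (hf x) (hg x))
  have hden : 0 ≤ (2 - s) / 3 * f x + (1 + s) / 3 * g x :=
    add_nonneg (mul_nonneg (by linarith) (hf x)) (mul_nonneg (by linarith) (hg x))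
  exact mul_nonneg (by nlinarith) (div_nonneg (sq_nonneg _) hden)

theorem holder_stability_pointwise_integral_general
    {X : Type*} [MeasurableSpace X] (μ : Measure X)
    (p q : ℝ) (hp : 1 < p) (hpq : 1/p + 1/q = 1)
    (A B : ℝ) (hA : A = (2 - 1/p)/3) (hB : B = (1 + 1/p)/3)
    (f g : X → ℝ) (hf : 0 ≤ f) (hg : 0 ≤ g)
    (hfi : Integrable f μ) (hgi : Integrable g μ)
    (hfs : ∫ x, f x ∂μ = 1) (hgs : ∫ x, g x ∂μ = 1) :
    1 - ∫ x, (f x) ^ (1/p) * (g x) ^ (1/q) ∂μ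
      ≥ (1/(2*p*q)) * ∫ x, (f x - g x)^2 / (A * f x + B * g x) ∂μ := by
  have hs0 : 0 ≤ 1 / p := by positivity
  have hs1 : 1 / p < 1 := (div_lt_one (by positivity)).2 hp
  have hq : 1 / q = 1 - 1 / p := by linarith
  have hc : 1 / (2 * p * q) = 1 / p * (1 - 1 / p) / 2 := by rw [← hq]; ring
  have key := mul_integral_sq_sub_div_le hs0 hs1 hf hg hfi hgi (μ := μ)
  rw [hfs, hgs] at key
  rw [ge_iff_le, hc, hA, hB, hq]
  linarith

theorem holder_stability_pointwise_integral
    {X : Type*} [MeasurableSpace X] (μ : Measure X)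
    (p q : ℝ) (hp : 1 < p) (hq : 1 < q) (hpq : 1/p + 1/q = 1)
    (A B : ℝ) (hA : A = (2 - 1/p)/3) (hB : B = (1 + 1/p)/3)
    (f g : X → ℝ) (hf : 0 ≤ f) (hg : 0 ≤ g)
    (hfi : Integrable f μ) (hgi : Integrable g μ)
    (hfs : ∫ x, f x ∂μ = 1) (hgs : ∫ x, g x ∂μ = 1) :
    1 - ∫ x, (f x) ^ (1/p) * (g x) ^ (1/q) ∂μ
      ≥ (1/(2*p*q)) * ∫ x, (f x - g x)^2 / (A * f x + B * g x) ∂μ :=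
  holder_stability_pointwise_integral_general μ p q hp hpq A B hA hB f g hf hg hfi hgi hfs hgs
end
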